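/- arXiv:1702.05754 — 2 statements merged into one kernel-verified Lean document; each statement's English description precedes it below -/
import Mathlib

section
/- If F is the Fitting subgroup of a finite soluble group G with G nontrivial, then F is nontrivial and the centralizer of F in G is contained in F. -/
/-!
Let `C` be the centralizer of `F`; it is normal because `F` is. If `C ≰ F`, walking down the
derived series of `C` (which reaches `1` since `G` is soluble) gives a normal subgroup `D ≤ C`
with `D ≰ F` but `[D, D] ≤ F`. As `D` centralizes `F`, `[D, D]` is central in `D`, so `D` is
nilpotent of class at most two, and the maximality of `F` forces `D ≤ F`, a contradiction.
Finally `F = 1` would give `G = C ≤ F = 1`.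
-/

open Subgroup

section

variable {G : Type*} [Group G]

theorem Group.isNilpotent_of_commutator_le_center (h : commutator G ≤ center G) :
    Group.IsNilpotent G :=
  Subgroup.isNilpotent_of_ker_le_center Abelianization.of (by rwa [Abelianization.ker_of])

theorem Subgroup.isNilpotent_of_commutator_le_centralizer {H : Subgroup G}
    (h : ⁅H, H⁆ ≤ centralizer H) : Group.IsNilpotent H := by
  refine Group.isNilpotent_of_commutator_le_center fun x hx => mem_center_iff.mpr fun y => ?_
  have hxH : (x : G) ∈ ⁅H, H⁆ := H.map_subtype_commutator ▸ mem_map_of_mem H.subtype hx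
  exact Subtype.ext (mem_centralizer_iff.mp (h hxH) y y.2)

theorem Subgroup.exists_normal_le_commutator_le_of_le_derivedSeries {N K : Subgroup G}
    (hN : N.Normal) (hNK : ¬N ≤ K) {i n : ℕ} (hNi : N ≤ derivedSeries G i)
    (hn : derivedSeries G (i + n) = ⊥) :
    ∃ D : Subgroup G, D.Normal ∧ D ≤ N ∧ ¬D ≤ K ∧ ⁅D, D⁆ ≤ K := by
  induction n generalizing N i with
  | zero => exact absurd (hNi.trans (hn.le.trans bot_le)) hNK
  | succ n ih =>
    by_cases hNN : ⁅N, N⁆ ≤ K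
    · exact ⟨N, hN, le_rfl, hNK, hNN⟩
    obtain ⟨D, hD, hDN, hDK, hDD⟩ := ih (commutator_normal N N) hNN
      (derivedSeries_succ G i ▸ commutator_mono hNi hNi) (by rwa [add_right_comm])
    exact ⟨D, hD, hDN.trans N.commutator_le_self, hDK, hDD⟩

theorem Subgroup.exists_normal_le_commutator_le [Group.IsSolvable G] {N K : Subgroup G}
    (hN : N.Normal) (hNK : ¬N ≤ K) :
    ∃ D : Subgroup G, D.Normal ∧ D ≤ N ∧ ¬D ≤ K ∧ ⁅D, D⁆ ≤ K := by
  obtain ⟨n, hn⟩ := Group.IsSolvable.solvable (G := G)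
  exact exists_normal_le_commutator_le_of_le_derivedSeries hN hNK le_top ((zero_add n).symm ▸ hn)

end

theorem fitting_nontrivial_self_centralizing_general
    {G : Type*} [Group G] [Nontrivial G] [Group.IsSolvable G]
    (F : Subgroup G) (hFnormal : F.Normal)
    (hFmax : ∀ N : Subgroup G, N.Normal → Group.IsNilpotent N → N ≤ F) :
    F ≠ ⊥ ∧ Subgroup.centralizer (F : Set G) ≤ F := by
  have hCF : centralizer (F : Set G) ≤ F := by
    by_contra hCF
    obtain ⟨D, hD, hDC, hDF, hDD⟩ := exists_normal_le_commutator_le inferInstance hCF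
    exact hDF (hFmax D hD (isNilpotent_of_commutator_le_centralizer
      (hDD.trans (le_centralizer_iff.mp hDC))))
  refine ⟨fun hF => ?_, hCF⟩
  subst hF
  have hC : centralizer ((⊥ : Subgroup G) : Set G) = ⊤ :=
    centralizer_eq_top_iff_subset.mpr (by simp)
  exact top_ne_bot (le_bot_iff.mp (hC ▸ hCF))

/-- If F is the Fitting subgroup of a finite soluble group G (G nontrivial),
i.e. the largest nilpotent normal subgroup of G, then F is nontrivial and
the centralizer of F in G is contained in F. -/
theorem fitting_nontrivial_self_centralizing
    {G : Type*} [Group G] [Finite G] [Nontrivial G] [Group.IsSolvable G]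
    (F : Subgroup G) (hFnormal : F.Normal) (hFnilp : Group.IsNilpotent F)
    (hFmax : ∀ N : Subgroup G, N.Normal → Group.IsNilpotent N → N ≤ F) :
    F ≠ ⊥ ∧ Subgroup.centralizer (F : Set G) ≤ F :=
  fitting_nontrivial_self_centralizing_general F hFnormal hFmax
end

section
/- If M is a finite soluble group whose order divides 80 and whose largest normal 2-subgroup O₂(M) is trivial, then M embeds into a group of the form Z₅ : Z₄ (i.e., |M| divides 20 and M has a normal Sylow 5-subgroup), and Aut(M) is soluble. -/
/-!
Let `P` be a Sylow `5`-subgroup of `M`; it has order `1` or `5`. If `P` is not normal there are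
`16` of them, so `P` is self-normalizing and, being abelian, has a normal complement by
Burnside's transfer theorem; that complement is a normal `2`-subgroup, hence trivial.
Once `P` is normal, its centralizer `C` is nilpotent (`P` is central in `C` and `C / P` is a
`2`-group), so the Sylow `2`-subgroup of `C` is characteristic in `C`, normal in `M`, and trivial:
`C = P`. Hence `M / P` embeds in `Aut(P) ≅ (ℤ/5)ˣ`, cyclic of order `4`.
Automorphisms of `M` preserve `1 < P < M`, and those acting trivially on `P` and on `M / P`
commute because `P` is abelian. So `Aut(M) → Aut(P) × Aut(M / P)` has abelian kernel, while its
target is abelian since `P` and `M / P` are cyclic.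
-/

open Subgroup

/-- `O_p(G) = 1`. -/
def PCoreTrivial (p : ℕ) (G : Type*) [Group G] : Prop :=
  ∀ N : Subgroup G, N.Normal → IsPGroup p N → N = ⊥

section

variable {G : Type*} [Group G]

theorem Sylow.eq_top_of_normalizer_le_centralizer [Finite G] {p q : ℕ} [Fact p.Prime]
    (P : Sylow p G) (hq : PCoreTrivial q G) (hindex : ∃ k, (P : Subgroup G).index = q ^ k)
    (hP : normalizer (P : Set G) ≤ centralizer (P : Set G)) : (P : Subgroup G) = ⊤ := by
  have hK := MonoidHom.ker_transferSylow_isComplement' P hP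
  obtain ⟨k, hk⟩ := hindex
  have hKq : IsPGroup q (MonoidHom.transferSylow P hP).ker :=
    IsPGroup.of_card (n := k) (hK.index_eq_card ▸ hk)
  rwa [hq _ (MonoidHom.normal_ker _) hKq, isComplement'_bot_left] at hK

theorem Subgroup.centralizer_eq_self_of_index_eq_prime_pow [Finite G] {q : ℕ} [Fact q.Prime]
    (N : Subgroup G) [N.Normal] [IsMulCommutative N] (hq : PCoreTrivial q G)
    (hindex : ∃ k, N.index = q ^ k) :
    centralizer (N : Set G) = N := by
  set C := centralizer (N : Set G)
  have hNC : N ≤ C := le_centralizer N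
  obtain ⟨j, hj⟩ : ∃ j, N.relIndex C = q ^ j := by
    obtain ⟨k, hk⟩ := hindex
    obtain ⟨j, -, hj⟩ := (Nat.dvd_prime_pow Fact.out).mp (hk ▸ relIndex_dvd_index_of_le hNC)
    exact ⟨j, hj⟩
  have hcentral : N.subgroupOf C ≤ center C := fun x hx =>
    mem_center_iff.mpr fun y => Subtype.ext (y.2 x hx).symm
  have : Group.IsNilpotent (C ⧸ N.subgroupOf C) := (IsPGroup.of_card (n := j) hj).isNilpotent
  have : Group.IsNilpotent C :=
    isNilpotent_of_ker_le_center (QuotientGroup.mk' (N.subgroupOf C))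
      (by rwa [QuotientGroup.ker_mk'])
  obtain ⟨Q⟩ : Nonempty (Sylow q C) := inferInstance
  have := Q.characteristic_of_normal inferInstance
  have hQ : (Q : Subgroup C) = ⊥ := by
    have := hq _ inferInstance (Q.2.map C.subtype)
    rwa [map_eq_bot_iff_of_injective _ C.subtype_injective] at this
  have hj0 : j = 0 := by
    by_contra hj0
    refine Q.ne_bot_of_dvd_card ?_ hQ
    exact (dvd_pow_self q hj0).trans (hj ▸ relIndex_dvd_card N C)
  exact le_antisymm (relIndex_eq_one.mp (by rw [hj, hj0, pow_zero])) hNC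

def MulAut.quotientOfCharacteristic (N : Subgroup G) [N.Characteristic] :
    MulAut G →* MulAut (G ⧸ N) where
  toFun φ := QuotientGroup.congr N N φ (characteristic_iff_map_eq.mp ‹_› φ)
  map_one' := by
    ext x
    induction x using QuotientGroup.induction_on
    rfl
  map_mul' φ ψ := by
    ext x
    induction x using QuotientGroup.induction_on
    rfl

theorem MulAut.commute_of_stabilizes {N : Subgroup G} [IsMulCommutative N] {φ ψ : MulAut G}
    (hφN : ∀ n ∈ N, φ n = n) (hψN : ∀ n ∈ N, ψ n = n)
    (hφ : ∀ g, g⁻¹ * φ g ∈ N) (hψ : ∀ g, g⁻¹ * ψ g ∈ N) : Commute φ ψ := by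
  ext g
  have hφg : φ g = g * (g⁻¹ * φ g) := by group
  have hψg : ψ g = g * (g⁻¹ * ψ g) := by group
  have hcomm : g⁻¹ * φ g * (g⁻¹ * ψ g) = g⁻¹ * ψ g * (g⁻¹ * φ g) :=
    congrArg Subtype.val (mul_comm' (⟨_, hφ g⟩ : N) ⟨_, hψ g⟩)
  change φ (ψ g) = ψ (φ g)
  calc φ (ψ g) = g * (g⁻¹ * φ g) * (g⁻¹ * ψ g) := by
        rw [hψg, map_mul, hφN _ (hψ g), ← hφg, ← hψg]
    _ = g * (g⁻¹ * ψ g) * (g⁻¹ * φ g) := by rw [mul_assoc, hcomm, ← mul_assoc]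
    _ = ψ (φ g) := by rw [hφg, map_mul, hψN _ (hφ g), ← hφg, ← hψg]

theorem MulAut.isSolvable_of_characteristic (N : Subgroup G) [N.Characteristic]
    [IsMulCommutative N] [Group.IsSolvable (MulAut N)] [Group.IsSolvable (MulAut (G ⧸ N))] :
    Group.IsSolvable (MulAut G) := by
  set f := (MulAut.characteristic N).prod (MulAut.quotientOfCharacteristic N)
  have hker : ∀ φ ∈ f.ker, (∀ n ∈ N, φ n = n) ∧ ∀ g, g⁻¹ * φ g ∈ N := by
    intro φ hφ
    rw [MonoidHom.ker_prod, mem_inf, MonoidHom.mem_ker, MonoidHom.mem_ker] at hφ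
    refine ⟨fun n hn => congrArg Subtype.val (MulEquiv.ext_iff.mp hφ.1 ⟨n, hn⟩),
      fun g => ?_⟩
    exact QuotientGroup.eq.mp (MulEquiv.ext_iff.mp hφ.2 g).symm
  have : Group.IsSolvable f.ker := Group.isSolvable_of_comm fun φ ψ => Subtype.ext <|
    MulAut.commute_of_stabilizes (hker φ φ.2).1 (hker ψ ψ.2).1 (hker φ φ.2).2 (hker ψ ψ.2).2
  exact Group.isSolvable_of_ker_le_range f.ker.subtype f (by rw [range_subtype])

instance IsCyclic.isSolvable_mulAut [IsCyclic G] : Group.IsSolvable (MulAut G) :=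
  Group.isSolvable_of_isSolvable_injective (f := (IsCyclic.mulAutMulEquiv G).toMonoidHom)
    (IsCyclic.mulAutMulEquiv G).injective

theorem IsPGroup.isCyclic_mulAut {p : ℕ} [Fact p.Prime] (hp2 : p ≠ 2) [Finite G] [IsCyclic G]
    (hG : IsPGroup p G) : IsCyclic (MulAut G) := by
  obtain ⟨k, hk⟩ := hG.exists_card_eq
  have := ZMod.isCyclic_units_of_prime_pow p Fact.out hp2 k
  rw [← hk] at this
  exact isCyclic_of_injective (IsCyclic.mulAutMulEquiv G).toMonoidHom
    (IsCyclic.mulAutMulEquiv G).injective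

theorem MulAut.conjNormal_ker (N : Subgroup G) [N.Normal] :
    (MulAut.conjNormal : G →* MulAut N).ker = centralizer (N : Set G) := by
  ext g
  rw [MonoidHom.mem_ker, mem_centralizer_iff, MulEquiv.ext_iff, Subtype.forall]
  refine forall₂_congr fun n _ => ?_
  rw [← Subtype.coe_inj, MulAut.conjNormal_apply, MulAut.one_apply, mul_inv_eq_iff_eq_mul,
    eq_comm]

theorem exists_injective_quotient_mulAut_of_centralizer_eq {N : Subgroup G} [N.Normal]
    (hN : centralizer (N : Set G) = N) : ∃ f : G ⧸ N →* MulAut N, Function.Injective f := by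
  set c : G →* MulAut N := MulAut.conjNormal
  have hker : N = c.ker := ((MulAut.conjNormal_ker N).trans hN).symm
  exact ⟨(QuotientGroup.kerLift c).comp (QuotientGroup.quotientMulEquivOfEq hker).toMonoidHom,
    (QuotientGroup.kerLift_injective c).comp (QuotientGroup.quotientMulEquivOfEq hker).injective⟩

end

namespace Sylow

variable {G : Type*} [Group G] [Finite G] [Fact (Nat.Prime 5)] (hG : Nat.card G ∣ 80)
  (P : Sylow 5 G)
include hG

theorem card_dvd_five_of_card_dvd_eighty : Nat.card P ∣ 5 := by
  obtain ⟨a, ha⟩ := P.2.exists_card_eq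
  have hcop : (Nat.card P).Coprime 16 := ha ▸ Nat.Coprime.pow_left a (by norm_num)
  exact hcop.dvd_of_dvd_mul_right ((card_subgroup_dvd_card _).trans hG)

theorem index_dvd_sixteen_of_card_dvd_eighty : (P : Subgroup G).index ∣ 16 := by
  have hcop : (P : Subgroup G).index.Coprime 5 :=
    ((Nat.Prime.coprime_iff_not_dvd Fact.out).mpr P.not_dvd_index).symm
  exact hcop.dvd_of_dvd_mul_left ((index_dvd_card _).trans hG)

theorem exists_index_eq_two_pow_of_card_dvd_eighty : ∃ k, (P : Subgroup G).index = 2 ^ k := by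
  obtain ⟨k, -, hk⟩ := (Nat.dvd_prime_pow Nat.prime_two).mp
    (show (P : Subgroup G).index ∣ 2 ^ 4 from P.index_dvd_sixteen_of_card_dvd_eighty hG)
  exact ⟨k, hk⟩

theorem normal_of_card_dvd_eighty (hO2 : PCoreTrivial 2 G) : (P : Subgroup G).Normal := by
  have hdvd : Nat.card (Sylow 5 G) ∣ 16 :=
    P.card_dvd_index.trans (P.index_dvd_sixteen_of_card_dvd_eighty hG)
  have hmod : Nat.card (Sylow 5 G) % 5 = 1 := card_sylow_modEq_one 5 G
  have hcases : Nat.card (Sylow 5 G) = 1 ∨ Nat.card (Sylow 5 G) = 16 := by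
    have := Nat.le_of_dvd (by norm_num) hdvd
    interval_cases Nat.card (Sylow 5 G) <;> omega
  rcases hcases with h1 | h16
  · exact normalizer_eq_top_iff.mp (index_eq_one.mp (P.card_eq_index_normalizer ▸ h1))
  · have hN : Nat.card (normalizer (P : Set G)) ∣ 5 := by
      have := card_mul_index (normalizer (P : Set G))
      rw [← P.card_eq_index_normalizer, h16] at this
      exact Nat.dvd_of_mul_dvd_mul_right (by norm_num) (this ▸ hG)
    have : IsCyclic (normalizer (P : Set G)) := isCyclic_of_card_dvd_prime hN
    have hNC : normalizer (P : Set G) ≤ centralizer (P : Set G) :=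
      (le_centralizer _).trans (centralizer_le le_normalizer)
    rw [P.eq_top_of_normalizer_le_centralizer hO2
      (P.exists_index_eq_two_pow_of_card_dvd_eighty hG) hNC]
    infer_instance

end Sylow

theorem order_dvd_eighty_trivial_O2_general
    {M : Type*} [Group M] [Finite M]
    (hord : Nat.card M ∣ 80)
    (hO2 : ∀ P : Subgroup M, P.Normal → IsPGroup 2 P → P = ⊥) :
    Nat.card M ∣ 20 ∧ (∃ P : Sylow 5 M, (P : Subgroup M).Normal) ∧
      IsSolvable (MulAut M) := by
  have : Fact (Nat.Prime 5) := ⟨by norm_num⟩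
  obtain ⟨P⟩ : Nonempty (Sylow 5 M) := inferInstance
  have hP5 : Nat.card P ∣ 5 := P.card_dvd_five_of_card_dvd_eighty hord
  have : IsCyclic P := isCyclic_of_card_dvd_prime hP5
  have hnormal : (P : Subgroup M).Normal := P.normal_of_card_dvd_eighty hord hO2
  have hC : centralizer (P : Set M) = P :=
    centralizer_eq_self_of_index_eq_prime_pow _ hO2
      (P.exists_index_eq_two_pow_of_card_dvd_eighty hord)
  obtain ⟨f, hf⟩ := exists_injective_quotient_mulAut_of_centralizer_eq hC
  have : IsCyclic (MulAut P) := P.2.isCyclic_mulAut (by norm_num)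
  have : IsCyclic (M ⧸ (P : Subgroup M)) := isCyclic_of_injective f hf
  have : (P : Subgroup M).Characteristic := P.characteristic_of_normal hnormal
  have hquot : Nat.card (M ⧸ (P : Subgroup M)) ∣ 4 := calc
    _ ∣ Nat.card (MulAut P) := card_dvd_of_injective f hf
    _ = Nat.totient (Nat.card P) := IsCyclic.card_mulAut P
    _ ∣ Nat.totient 5 := Nat.totient_dvd_of_dvd hP5
  refine ⟨?_, ⟨P, hnormal⟩, MulAut.isSolvable_of_characteristic (P : Subgroup M)⟩
  rw [card_eq_card_quotient_mul_card_subgroup (P : Subgroup M), mul_comm]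
  exact mul_dvd_mul hP5 hquot

/-- If `M` is a finite soluble group whose order divides `80` and whose largest
normal `2`-subgroup is trivial (every normal `2`-subgroup is trivial), then
`|M|` divides `20`, `M` has a normal Sylow `5`-subgroup (so `M` embeds into a
group of shape `Z₅ : Z₄`), and `Aut(M)` is soluble. -/
theorem order_dvd_eighty_trivial_O2
    {M : Type*} [Group M] [Finite M] [Group.IsSolvable M]
    (hord : Nat.card M ∣ 80)
    (hO2 : ∀ P : Subgroup M, P.Normal → IsPGroup 2 P → P = ⊥) :
    Nat.card M ∣ 20 ∧ (∃ P : Sylow 5 M, (P : Subgroup M).Normal) ∧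
      IsSolvable (MulAut M) :=
  order_dvd_eighty_trivial_O2_general hord hO2
end
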